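/- For a square-summable sequence φ: ℤ^d → ℂ and p ∈ {1,…,2^{d−1}}, ‖φ‖_{ℓ∞(ℤ^d)} ≤ μ_{p,d} · ‖∇_D φ‖_{ℓ²(ℤ^d)}^{p/2^d} · ‖φ‖_{ℓ²(ℤ^d)}^{1 − p/2^d}, where μ_{p,d} := (2^{d·2^{d−1}−p} / d^{p/2})^{1/2^d}. -/

import Mathlib

/-!
On ℤ, telescoping `|g|²` in from `+∞` and from `-∞` and applying Cauchy–Schwarz gives the
one-dimensional Agmon inequality `|g k|² ≤ ‖Dg‖ ‖g‖`. Applied to the line through `ζ` in each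
direction `i` it gives `|φ ζ|⁴ ≤ ‖D_i φ‖² ‖φ‖²`, and summing over `i` gives
`√d |φ ζ|² ≤ ‖∇_D φ‖ ‖φ‖`. Together with the trivial bound `‖∇_D φ‖ ≤ 2 √d ‖φ‖`, interpolation
yields `|φ ζ| ≤ 2^(1/2 - θ) d^(-θ/2) ‖∇_D φ‖^θ ‖φ‖^(1 - θ)` for every `θ ≤ 1/2`, in particular for
`θ = p / 2^d`, and this constant is at most `μ_{p,d}`.
-/

noncomputable section

/-- Partial difference operator in direction `i` on ℤ^d. -/
def Dop {d : ℕ} (i : Fin d) (φ : (Fin d → ℤ) → ℂ) : (Fin d → ℤ) → ℂ :=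
  fun ζ => φ (Function.update ζ i (ζ i + 1)) - φ ζ

/-- The ℓ²(ℤ^d) norm. -/
def l2 {d : ℕ} (φ : (Fin d → ℤ) → ℂ) : ℝ := Real.sqrt (∑' ζ : Fin d → ℤ, ‖φ ζ‖ ^ 2)

/-- The ℓ∞(ℤ^d) norm. -/
def lsup {d : ℕ} (φ : (Fin d → ℤ) → ℂ) : ℝ := ⨆ ζ : Fin d → ℤ, ‖φ ζ‖

/-- The ℓ²(ℤ^d) norm of the discrete gradient. -/
def gradn {d : ℕ} (φ : (Fin d → ℤ) → ℂ) : ℝ :=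
  Real.sqrt (∑ i : Fin d, ∑' ζ : Fin d → ℤ, ‖Dop i φ ζ‖ ^ 2)

open Filter Topology Function

section Shift

variable {A E : Type*} [AddGroup A] [SeminormedAddCommGroup E] {f : A → E}

lemma sq_norm_sub_le (x y : E) : ‖x - y‖ ^ 2 ≤ 2 * (‖x‖ ^ 2 + ‖y‖ ^ 2) :=
  (pow_le_pow_left₀ (norm_nonneg _) (norm_sub_le x y) 2).trans (add_sq_le ..)

lemma abs_sq_norm_sub_sq_norm_le (x y : E) : |‖x‖ ^ 2 - ‖y‖ ^ 2| ≤ ‖x - y‖ * (‖x‖ + ‖y‖) := by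
  rw [sq_sub_sq, abs_mul, abs_of_nonneg (by positivity), mul_comm]
  gcongr
  exact abs_norm_sub_norm_le x y

lemma tsum_sq_norm_comp_add_right (v : A) : ∑' x, ‖f (x + v)‖ ^ 2 = ∑' x, ‖f x‖ ^ 2 :=
  (Equiv.addRight v).tsum_eq fun x => ‖f x‖ ^ 2

lemma Summable.sq_norm_comp_add_right (hf : Summable fun x => ‖f x‖ ^ 2) (v : A) :
    Summable fun x => ‖f (x + v)‖ ^ 2 :=
  hf.comp_injective (add_left_injective v)

lemma Summable.sq_norm_sub_comp_add_right (hf : Summable fun x => ‖f x‖ ^ 2) (v : A) :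
    Summable fun x => ‖f (x + v) - f x‖ ^ 2 :=
  .of_nonneg_of_le (fun _ => by positivity) (fun _ => sq_norm_sub_le _ _)
    (((hf.sq_norm_comp_add_right v).add hf).mul_left 2)

lemma tsum_sq_norm_sub_comp_add_right_le (hf : Summable fun x => ‖f x‖ ^ 2) (v : A) :
    ∑' x, ‖f (x + v) - f x‖ ^ 2 ≤ 4 * ∑' x, ‖f x‖ ^ 2 := by
  have hsum := (hf.sq_norm_comp_add_right v).add hf
  calc ∑' x, ‖f (x + v) - f x‖ ^ 2 ≤ ∑' x, 2 * (‖f (x + v)‖ ^ 2 + ‖f x‖ ^ 2) :=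
        (hf.sq_norm_sub_comp_add_right v).tsum_le_tsum (fun _ => sq_norm_sub_le _ _)
          (hsum.mul_left 2)
    _ = 4 * ∑' x, ‖f x‖ ^ 2 := by
        rw [tsum_mul_left, (hf.sq_norm_comp_add_right v).tsum_add hf, tsum_sq_norm_comp_add_right]
        ring

end Shift

lemma summable_mul_and_tsum_mul_le_sqrt_mul_sqrt {ι : Type*} {f g : ι → ℝ}
    (hf : ∀ i, 0 ≤ f i) (hg : ∀ i, 0 ≤ g i) (hf2 : Summable fun i => f i ^ 2)
    (hg2 : Summable fun i => g i ^ 2) :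
    (Summable fun i => f i * g i) ∧
      ∑' i, f i * g i ≤ √(∑' i, f i ^ 2) * √(∑' i, g i ^ 2) := by
  have holder := Real.summable_and_inner_le_Lp_mul_Lq_tsum_of_nonneg .two_two hf hg
    (by simpa only [Real.rpow_two] using hf2) (by simpa only [Real.rpow_two] using hg2)
  simpa only [Real.rpow_two, Real.sqrt_eq_rpow] using holder

lemma two_mul_le_tsum_dist_of_tendsto_cofinite {f : ℤ → ℝ} (hf : Tendsto f cofinite (𝓝 0))
    (hΔ : Summable fun n => dist (f n) (f (n + 1))) (k : ℤ) :
    2 * f k ≤ ∑' n, dist (f n) (f (n + 1)) := by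
  have hfinite (N : ℕ) : 2 * f k - f (k - N) - f (k + N) ≤ ∑' n, dist (f n) (f (n + 1)) := by
    set u : ℕ → ℝ := fun i => f (k - N + i)
    have hinj : Injective fun i : ℕ => k - N + i := (add_right_injective _).comp Nat.cast_injective
    have hu (i : ℕ) : dist (u i) (u (i + 1)) = dist (f (k - N + i)) (f (k - N + i + 1)) := by
      simp only [u, Nat.cast_succ, add_assoc]
    calc 2 * f k - f (k - N) - f (k + N) ≤ dist (u 0) (u N) + dist (u N) (u (2 * N)) := by
          simp only [u, Real.dist_eq]
          push_cast
          rw [show k - N + 2 * N = k + N by ring, sub_add_cancel, add_zero]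
          linarith [neg_le_abs (f (k - N) - f k), le_abs_self (f k - f (k + N))]
      _ ≤ ∑ i ∈ Finset.range (2 * N), dist (u i) (u (i + 1)) := by
          rw [Finset.range_eq_Ico, ← Finset.sum_Ico_consecutive _ N.zero_le (by omega)]
          exact add_le_add (dist_le_Ico_sum_dist u N.zero_le) (dist_le_Ico_sum_dist u (by omega))
      _ ≤ ∑' i : ℕ, dist (u i) (u (i + 1)) := by
          simp only [hu]
          exact (hΔ.comp_injective hinj).sum_le_tsum _ fun _ _ => dist_nonneg
      _ ≤ ∑' n, dist (f n) (f (n + 1)) := by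
          simp only [hu]
          exact tsum_comp_le_tsum_of_inj hΔ (fun _ => dist_nonneg) hinj
  have hinj_add : Injective fun N : ℕ => k + N := (add_right_injective k).comp Nat.cast_injective
  have hinj_sub : Injective fun N : ℕ => k - N := sub_right_injective.comp Nat.cast_injective
  have hlim_add := hf.comp (Nat.cofinite_eq_atTop ▸ hinj_add.tendsto_cofinite)
  have hlim_sub := hf.comp (Nat.cofinite_eq_atTop ▸ hinj_sub.tendsto_cofinite)
  have hlim := (tendsto_const_nhds (x := 2 * f k)).sub hlim_sub |>.sub hlim_add
  rw [sub_zero, sub_zero] at hlim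
  exact le_of_tendsto' hlim hfinite

theorem sq_norm_le_sqrt_tsum_sq_norm_sub_mul_sqrt_tsum {E : Type*} [SeminormedAddCommGroup E]
    {g : ℤ → E} (hg : Summable fun n => ‖g n‖ ^ 2) (k : ℤ) :
    ‖g k‖ ^ 2 ≤ √(∑' n, ‖g (n + 1) - g n‖ ^ 2) * √(∑' n, ‖g n‖ ^ 2) := by
  have hD := hg.sq_norm_sub_comp_add_right 1
  obtain ⟨hsum₀, hle₀⟩ := summable_mul_and_tsum_mul_le_sqrt_mul_sqrt
    (fun _ => norm_nonneg _) (fun _ => norm_nonneg _) hD hg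
  obtain ⟨hsum₁, hle₁⟩ := summable_mul_and_tsum_mul_le_sqrt_mul_sqrt
    (fun _ => norm_nonneg _) (fun _ => norm_nonneg _) hD (hg.sq_norm_comp_add_right 1)
  rw [tsum_sq_norm_comp_add_right] at hle₁
  have hdist (n : ℤ) : dist (‖g n‖ ^ 2) (‖g (n + 1)‖ ^ 2) ≤
      ‖g (n + 1) - g n‖ * ‖g (n + 1)‖ + ‖g (n + 1) - g n‖ * ‖g n‖ := by
    rw [dist_comm, Real.dist_eq, ← mul_add]
    exact abs_sq_norm_sub_sq_norm_le _ _
  have hdist_sum := Summable.of_nonneg_of_le (fun _ => dist_nonneg) hdist (hsum₁.add hsum₀)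
  have htele := two_mul_le_tsum_dist_of_tendsto_cofinite hg.tendsto_cofinite_zero hdist_sum k
  have hbound := hdist_sum.tsum_le_tsum hdist (hsum₁.add hsum₀)
  rw [hsum₁.tsum_add hsum₀] at hbound
  linarith

lemma update_self_add_one {d : ℕ} (ζ : Fin d → ℤ) (i : Fin d) :
    update ζ i (ζ i + 1) = ζ + Pi.single i 1 := by
  ext j
  rcases eq_or_ne j i with rfl | hj <;> simp [*]

lemma Dop_apply_eq {d : ℕ} (i : Fin d) (φ : (Fin d → ℤ) → ℂ) (ζ : Fin d → ℤ) :
    Dop i φ ζ = φ (ζ + Pi.single i 1) - φ ζ := by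
  rw [Dop, update_self_add_one]

section Lattice

variable {d : ℕ} {φ : (Fin d → ℤ) → ℂ}

lemma summable_sq_norm_Dop (h : Summable fun ζ => ‖φ ζ‖ ^ 2) (i : Fin d) :
    Summable fun ζ => ‖Dop i φ ζ‖ ^ 2 := by
  simpa only [Dop_apply_eq] using h.sq_norm_sub_comp_add_right (Pi.single i 1)

lemma gradn_le (h : Summable fun ζ => ‖φ ζ‖ ^ 2) : gradn φ ≤ 2 * √d * l2 φ := by
  rw [gradn, Real.sqrt_le_iff]
  refine ⟨by unfold l2; positivity, ?_⟩
  rw [mul_pow, mul_pow, Real.sq_sqrt d.cast_nonneg, l2,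
    Real.sq_sqrt (tsum_nonneg fun _ => by positivity)]
  calc ∑ i : Fin d, ∑' ζ, ‖Dop i φ ζ‖ ^ 2 ≤ ∑ _i : Fin d, 4 * ∑' ζ, ‖φ ζ‖ ^ 2 := by
        gcongr with i
        simpa only [Dop_apply_eq] using tsum_sq_norm_sub_comp_add_right_le h (Pi.single i 1)
    _ = 2 ^ 2 * d * ∑' ζ, ‖φ ζ‖ ^ 2 := by
        rw [Finset.sum_const, Finset.card_univ, Fintype.card_fin, nsmul_eq_mul]
        ring

lemma sq_norm_le_sqrt_tsum_sq_norm_Dop_mul_l2 (h : Summable fun ζ => ‖φ ζ‖ ^ 2) (i : Fin d)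
    (ζ : Fin d → ℤ) : ‖φ ζ‖ ^ 2 ≤ √(∑' ζ, ‖Dop i φ ζ‖ ^ 2) * l2 φ := by
  have hinj : Injective (update ζ i) := update_injective ζ i
  have hline (t : ℤ) : φ (update ζ i (t + 1)) - φ (update ζ i t) = Dop i φ (update ζ i t) := by
    simp [Dop]
  calc ‖φ ζ‖ ^ 2 = ‖φ (update ζ i (ζ i))‖ ^ 2 := by rw [update_eq_self]
    _ ≤ √(∑' t, ‖φ (update ζ i (t + 1)) - φ (update ζ i t)‖ ^ 2) *
          √(∑' t, ‖φ (update ζ i t)‖ ^ 2) :=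
        sq_norm_le_sqrt_tsum_sq_norm_sub_mul_sqrt_tsum (h.comp_injective hinj) _
    _ ≤ √(∑' ζ, ‖Dop i φ ζ‖ ^ 2) * l2 φ := by
        simp only [hline, l2]
        gcongr
        · exact tsum_comp_le_tsum_of_inj (summable_sq_norm_Dop h i) (fun _ => by positivity) hinj
        · exact tsum_comp_le_tsum_of_inj h (fun _ => by positivity) hinj

lemma sqrt_mul_sq_norm_le_gradn_mul_l2 (h : Summable fun ζ => ‖φ ζ‖ ^ 2) (ζ : Fin d → ℤ) :
    √d * ‖φ ζ‖ ^ 2 ≤ gradn φ * l2 φ := by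
  refine le_of_pow_le_pow_left₀ two_ne_zero (by unfold gradn l2; positivity) ?_
  rw [mul_pow, mul_pow, Real.sq_sqrt d.cast_nonneg, gradn,
    Real.sq_sqrt (Finset.sum_nonneg fun _ _ => tsum_nonneg fun _ => by positivity),
    Finset.sum_mul]
  calc (d : ℝ) * (‖φ ζ‖ ^ 2) ^ 2 = ∑ _i : Fin d, (‖φ ζ‖ ^ 2) ^ 2 := by simp
    _ ≤ ∑ i : Fin d, (√(∑' ζ, ‖Dop i φ ζ‖ ^ 2) * l2 φ) ^ 2 := by
        gcongr with i
        exact sq_norm_le_sqrt_tsum_sq_norm_Dop_mul_l2 h i ζ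
    _ = ∑ i : Fin d, (∑' ζ, ‖Dop i φ ζ‖ ^ 2) * l2 φ ^ 2 := by
        refine Finset.sum_congr rfl fun i _ => ?_
        rw [mul_pow, Real.sq_sqrt (tsum_nonneg fun _ => by positivity)]

end Lattice

lemma le_rpow_mul_rpow_of_sq_le_mul {x a b c θ : ℝ} (ha : 0 ≤ a) (hb : 0 ≤ b) (hc : 0 ≤ c)
    (hθ : θ ≤ 1 / 2) (hxab : x ^ 2 ≤ a * b) (hacb : a ≤ c * b) :
    x ≤ c ^ (1 / 2 - θ) * a ^ θ * b ^ (1 - θ) := by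
  refine abs_le_of_sq_le_sq' ?_ (by positivity) |>.2
  have hsq (y r : ℝ) (hy : 0 ≤ y) : (y ^ r) ^ 2 = y ^ (2 * r) := by
    rw [← Real.rpow_natCast, ← Real.rpow_mul hy, mul_comm, Nat.cast_ofNat]
  calc x ^ 2 ≤ a * b := hxab
    _ = a ^ (2 * θ) * a ^ (1 - 2 * θ) * b := by
        rw [← Real.rpow_add' ha (by norm_num), add_sub_cancel, Real.rpow_one]
    _ ≤ a ^ (2 * θ) * (c * b) ^ (1 - 2 * θ) * b := by gcongr; linarith
    _ = (c ^ (1 / 2 - θ) * a ^ θ * b ^ (1 - θ)) ^ 2 := by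
        rw [mul_pow, mul_pow, hsq _ _ hc, hsq _ _ ha, hsq _ _ hb, Real.mul_rpow hc hb,
          show 2 * (1 - θ) = 1 - 2 * θ + 1 by ring, Real.rpow_add_one' hb (by linarith)]
        ring_nf

lemma agmon_constant_eq {d p : ℕ} (hd : 1 ≤ d) (hp : p ≤ d * 2 ^ (d - 1)) :
    (2 ^ (d * 2 ^ (d - 1) - p) / (d : ℝ) ^ ((p : ℝ) / 2)) ^ ((1 : ℝ) / 2 ^ d) =
      2 ^ ((d : ℝ) / 2 - p / 2 ^ d) / √d ^ ((p : ℝ) / 2 ^ d) := by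
  have hpow : (2 : ℝ) ^ d = 2 ^ (d - 1) * 2 := by rw [← pow_succ, Nat.sub_add_cancel hd]
  rw [Real.div_rpow (by positivity) (by positivity), ← Real.rpow_natCast 2,
    ← Real.rpow_mul zero_le_two, ← Real.rpow_mul d.cast_nonneg, Real.sqrt_eq_rpow,
    ← Real.rpow_mul d.cast_nonneg, Nat.cast_sub hp]
  congr 2
  · push_cast
    rw [hpow]
    field_simp
  · ring

theorem agmon_kolmogorov_general {d : ℕ} (hd : 1 ≤ d) (φ : (Fin d → ℤ) → ℂ)
    (h : Summable fun ζ : Fin d → ℤ => ‖φ ζ‖ ^ 2) (p : ℕ)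
    (hp2 : p ≤ 2 ^ (d - 1)) :
    lsup φ ≤
      ((2 ^ (d * 2 ^ (d - 1) - p) / (d : ℝ) ^ ((p : ℝ) / 2)) ^ ((1 : ℝ) / 2 ^ d)) *
        gradn φ ^ ((p : ℝ) / 2 ^ d) * l2 φ ^ (1 - (p : ℝ) / 2 ^ d) := by
  have hsqrt_d : 0 < √(d : ℝ) := by positivity
  have hG : 0 ≤ gradn φ := Real.sqrt_nonneg _
  have hL : 0 ≤ l2 φ := Real.sqrt_nonneg _
  rw [agmon_constant_eq hd (hp2.trans (Nat.le_mul_of_pos_left _ hd))]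
  set θ : ℝ := p / 2 ^ d
  have hθ : θ ≤ 1 / 2 := by
    rw [div_le_iff₀ (by positivity), ← Nat.sub_add_cancel hd, pow_succ]
    linarith [show (p : ℝ) ≤ 2 ^ (d - 1) by exact_mod_cast hp2]
  refine ciSup_le fun ζ => ?_
  calc ‖φ ζ‖ ≤ 2 ^ (1 / 2 - θ) * (gradn φ / √d) ^ θ * l2 φ ^ (1 - θ) := by
        refine le_rpow_mul_rpow_of_sq_le_mul (by positivity) hL zero_le_two hθ ?_ ?_
        · rw [div_mul_eq_mul_div, le_div_iff₀ hsqrt_d, mul_comm]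
          exact sqrt_mul_sq_norm_le_gradn_mul_l2 h ζ
        · rw [div_le_iff₀ hsqrt_d]
          linarith [gradn_le h]
    _ = 2 ^ (1 / 2 - θ) / √d ^ θ * gradn φ ^ θ * l2 φ ^ (1 - θ) := by
        rw [Real.div_rpow hG hsqrt_d.le]
        ring
    _ ≤ 2 ^ ((d : ℝ) / 2 - θ) / √d ^ θ * gradn φ ^ θ * l2 φ ^ (1 - θ) := by
        have : (1 : ℝ) ≤ d := by exact_mod_cast hd
        gcongr
        linarith

/-- The Agmon–Kolmogorov inequality on ℓ²(ℤ^d). -/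
theorem agmon_kolmogorov {d : ℕ} (hd : 1 ≤ d) (φ : (Fin d → ℤ) → ℂ)
    (h : Summable fun ζ : Fin d → ℤ => ‖φ ζ‖ ^ 2) (p : ℕ)
    (hp1 : 1 ≤ p) (hp2 : p ≤ 2 ^ (d - 1)) :
    lsup φ ≤
      ((2 ^ (d * 2 ^ (d - 1) - p) / (d : ℝ) ^ ((p : ℝ) / 2)) ^ ((1 : ℝ) / 2 ^ d)) *
        gradn φ ^ ((p : ℝ) / 2 ^ d) * l2 φ ^ (1 - (p : ℝ) / 2 ^ d) :=
  agmon_kolmogorov_general hd φ h p hp2
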